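/- (TTSVD quasioptimality) Let X ∈ ℝ^{n₁×…×n_d} (d ≥ 2) and let r = (r₁,…,r_{d−1}). For each 1 ≤ k ≤ d−1, set ε_k = min{‖X_{<k>} − Z‖_F : rank(Z) ≤ r_k}. Then there exists a tensor Y ∈ ℝ^{n₁×…×n_d} with rank(Y_{<k>}) ≤ r_k for all k such that ‖X − Y‖_F² ≤ Σ_{k=1}^{d−1} ε_k². Consequently, ‖X − Y‖_F ≤ √(d−1) · min{‖X − W‖_F : W has TT rank componentwise at most r}. -/

import Mathlib

/-- The Frobenius norm of a real matrix. -/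
noncomputable def mfrob {m n : Type*} [Fintype m] [Fintype n] (X : Matrix m n ℝ) : ℝ :=
  Real.sqrt (∑ i, ∑ j, (X i j) ^ 2)

/-- The Frobenius norm of a `d`-dimensional real tensor. -/
noncomputable def tfrob {d : ℕ} {n : Fin d → ℕ} (X : (∀ k, Fin (n k)) → ℝ) : ℝ :=
  Real.sqrt (∑ i : ∀ k, Fin (n k), (X i) ^ 2)

/-- The matricization of a `d`-dimensional tensor `X` splitting the indices after position `k`
(0-based): for `k : Fin (d-1)`, `matricize n X k.val` is the `(k+1)`-st matricization
`X_{<k+1>}` in 1-based notation. -/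
def matricize {d : ℕ} (n : Fin d → ℕ) (X : (∀ k, Fin (n k)) → ℝ) (k : ℕ) :
    Matrix (∀ j : {j : Fin d // j.val ≤ k}, Fin (n j.1))
      (∀ j : {j : Fin d // k < j.val}, Fin (n j.1)) ℝ :=
  Matrix.of fun row col =>
    X (fun j => if h : j.val ≤ k then row ⟨j, h⟩ else col ⟨j, Nat.lt_of_not_le h⟩)

/-!
TTSVD produces nested subspaces `⊤ = S₀ ⊇ S₁ ⊇ ⋯ ⊇ S_{d-1}` of tensors, where `S_{k+1}` consists
of the tensors whose `k`-th unfolding has all its columns in a subspace `W_k` of dimension at most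
`r_k`, and returns the orthogonal projection `Y` of `X` onto `S_{d-1}`. Since the subspaces are
nested, Pythagoras splits `‖X - Y‖²` into the sum of the `‖P_{S_k} X - P_{S_{k+1}} X‖²`.
The projection onto `S_k` acts column by column on the `k`-th unfolding, and `S_k` has the same
shape one level further, so `W_k` may be taken to be the projected column space of a best rank-`r_k`
approximation `Z` of `X_{<k>}`. Best approximation in `S_{k+1}` then bounds the `k`-th term by
`‖P_{S_k} (X - Z)‖ ≤ ‖X_{<k>} - Z‖ = ε_k`. Finally every `ε_k` is at most the error of any tensor of
TT rank at most `r`, which gives the factor `√(d - 1)`.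
-/

open Module

section Projection
variable {E : Type*} [NormedAddCommGroup E] [InnerProductSpace ℝ E]

theorem Submodule.norm_sub_sq_eq_norm_sub_starProjection_sq_add (U : Submodule ℝ E)
    [U.HasOrthogonalProjection] (y : E) {u : E} (hu : u ∈ U) :
    ‖y - u‖ ^ 2 = ‖y - U.starProjection y‖ ^ 2 + ‖U.starProjection y - u‖ ^ 2 := by
  simp only [sq]
  rw [← norm_add_sq_eq_norm_sq_add_norm_sq_real, sub_add_sub_cancel]
  exact U.inner_left_of_mem_orthogonal (sub_mem (U.starProjection_apply_mem y) hu)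
    (U.sub_starProjection_mem_orthogonal y)

theorem Submodule.norm_sub_starProjection_le (U : Submodule ℝ E) [U.HasOrthogonalProjection]
    (y : E) {u : E} (hu : u ∈ U) : ‖y - U.starProjection y‖ ≤ ‖y - u‖ := by
  rw [← sq_le_sq₀ (norm_nonneg _) (norm_nonneg _),
    U.norm_sub_sq_eq_norm_sub_starProjection_sq_add y hu]
  exact le_add_of_nonneg_right (sq_nonneg _)

theorem exists_submodule_sq_norm_sub_starProjection_le_sum [FiniteDimensional ℝ E]
    (P : ℕ → Submodule ℝ E → Prop) (x : E) (h0 : P 0 ⊤) :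
    ∀ (m : ℕ) (A : Fin m → Set E) (ε : Fin m → ℝ),
      (∀ (k : Fin m) (S : Submodule ℝ E), P k S → ∃ S' ≤ S, P (k + 1) S' ∧
        (S' : Set E) ⊆ A k ∧ ‖S.starProjection x - S'.starProjection x‖ ≤ ε k) →
      ∃ S : Submodule ℝ E, P m S ∧ (∀ k, (S : Set E) ⊆ A k) ∧
        ‖x - S.starProjection x‖ ^ 2 ≤ ∑ k, ε k ^ 2
  | 0, _, _, _ => ⟨⊤, h0, fun k => k.elim0, by simp [Submodule.starProjection_top]⟩
  | m + 1, A, ε, hstep => by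
    obtain ⟨S, hS, hSA, hSx⟩ := exists_submodule_sq_norm_sub_starProjection_le_sum P x h0 m
      (A ∘ Fin.castSucc) (ε ∘ Fin.castSucc) fun k => hstep k.castSucc
    obtain ⟨S', hS'S, hS', hS'A, hS'x⟩ := hstep (Fin.last m) S hS
    refine ⟨S', hS', Fin.lastCases hS'A fun k => le_trans hS'S (hSA k), ?_⟩
    rw [S.norm_sub_sq_eq_norm_sub_starProjection_sq_add x (hS'S (S'.starProjection_apply_mem x)),
      Fin.sum_univ_castSucc]
    exact add_le_add hSx (pow_le_pow_left₀ (norm_nonneg _) hS'x 2)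

end Projection

section Unfold
variable {ι R C : Type*} (e : ι ≃ R × C)

def unfold : EuclideanSpace ℝ ι ≃ₗ[ℝ] Matrix R C ℝ where
  toFun T := Matrix.of fun r c => T (e.symm (r, c))
  invFun M := WithLp.toLp 2 fun i => M (e i).1 (e i).2
  map_add' _ _ := rfl
  map_smul' _ _ := rfl
  left_inv T := by ext i; simp
  right_inv M := by ext r c; simp

@[simp]
theorem unfold_apply (T : EuclideanSpace ℝ ι) (r : R) (c : C) :
    unfold e T r c = T (e.symm (r, c)) :=
  rfl

def column (c : C) : EuclideanSpace ℝ ι →ₗ[ℝ] EuclideanSpace ℝ R where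
  toFun T := WithLp.toLp 2 fun r => unfold e T r c
  map_add' _ _ := rfl
  map_smul' _ _ := rfl

@[simp]
theorem column_apply (c : C) (T : EuclideanSpace ℝ ι) (r : R) :
    column e c T r = T (e.symm (r, c)) :=
  rfl

def ofColumns (f : C → EuclideanSpace ℝ R) : EuclideanSpace ℝ ι :=
  WithLp.toLp 2 fun i => f (e i).2 (e i).1

theorem column_ofColumns (f : C → EuclideanSpace ℝ R) (c : C) :
    column e c (ofColumns e f) = f c := by
  ext r
  simp [ofColumns]

def columnSubspace (V : Submodule ℝ (EuclideanSpace ℝ R)) : Submodule ℝ (EuclideanSpace ℝ ι) :=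
  ⨅ c, V.comap (column e c)

variable {e} in
theorem mem_columnSubspace {V : Submodule ℝ (EuclideanSpace ℝ R)} {T : EuclideanSpace ℝ ι} :
    T ∈ columnSubspace e V ↔ ∀ c, column e c T ∈ V := by
  simp [columnSubspace]

theorem columnSubspace_mono {V W : Submodule ℝ (EuclideanSpace ℝ R)} (h : V ≤ W) :
    columnSubspace e V ≤ columnSubspace e W :=
  fun _ hT => mem_columnSubspace.2 fun c => h (mem_columnSubspace.1 hT c)

theorem columnSubspace_top : columnSubspace e (⊤ : Submodule ℝ (EuclideanSpace ℝ R)) = ⊤ := by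
  simp [columnSubspace]

variable [Fintype C]

theorem finrank_span_range_column (T : EuclideanSpace ℝ ι) :
    finrank ℝ (Submodule.span ℝ (Set.range fun c => column e c T)) = (unfold e T).rank := by
  rw [Matrix.rank_eq_finrank_span_cols,
    ← LinearEquiv.finrank_map_eq (WithLp.linearEquiv 2 ℝ (R → ℝ)), Submodule.map_span,
    ← Set.range_comp]
  rfl

variable [Fintype R]

variable {e} in
theorem rank_unfold_le_finrank {W : Submodule ℝ (EuclideanSpace ℝ R)} {T : EuclideanSpace ℝ ι}
    (hT : T ∈ columnSubspace e W) : (unfold e T).rank ≤ finrank ℝ W := by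
  rw [← finrank_span_range_column]
  exact Submodule.finrank_mono
    (Submodule.span_le.2 (Set.range_subset_iff.2 (mem_columnSubspace.1 hT)))

variable [Fintype ι]

theorem inner_eq_sum_inner_column (T U : EuclideanSpace ℝ ι) :
    inner ℝ T U = ∑ c, inner ℝ (column e c T) (column e c U) := by
  simp only [PiLp.inner_apply, column_apply]
  rw [← e.symm.sum_comp, Fintype.sum_prod_type_right]

theorem mfrob_unfold (T : EuclideanSpace ℝ ι) : mfrob (unfold e T) = ‖T‖ := by
  rw [EuclideanSpace.norm_eq, mfrob, ← Fintype.sum_prod_type']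
  simp only [unfold_apply, Real.norm_eq_abs, sq_abs]
  rw [e.symm.sum_comp fun i => T i ^ 2]

theorem column_starProjection (V : Submodule ℝ (EuclideanSpace ℝ R)) (T : EuclideanSpace ℝ ι)
    (c : C) : column e c ((columnSubspace e V).starProjection T) =
      V.starProjection (column e c T) := by
  suffices h : (columnSubspace e V).starProjection T =
      ofColumns e fun c => V.starProjection (column e c T) by
    rw [h, column_ofColumns]
  refine (columnSubspace e V).eq_starProjection_of_mem_of_inner_eq_zero ?_ fun w hw => ?_
  · exact mem_columnSubspace.2 fun c => by
      rw [column_ofColumns]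
      exact V.starProjection_apply_mem _
  · rw [inner_eq_sum_inner_column e]
    refine Finset.sum_eq_zero fun c _ => ?_
    rw [map_sub, column_ofColumns]
    exact V.starProjection_inner_eq_zero _ _ (mem_columnSubspace.1 hw c)

/-- `W` is spanned by the projections onto `V` of the columns of `Z`: then `columnSubspace e W`
contains the projection of `Z` onto `columnSubspace e V`, which is at distance at most
`‖x - Z‖` from the projection of `x`. -/
theorem exists_le_finrank_le_norm_sub_starProjection_le (V : Submodule ℝ (EuclideanSpace ℝ R))
    (x : EuclideanSpace ℝ ι) (Z : Matrix R C ℝ) :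
    ∃ W ≤ V, finrank ℝ W ≤ Z.rank ∧
      ‖(columnSubspace e V).starProjection x - (columnSubspace e W).starProjection x‖ ≤
        mfrob (unfold e x - Z) := by
  set S := columnSubspace e V
  set z := (unfold e).symm Z
  let W := (Submodule.span ℝ (Set.range fun c => column e c z)).map V.starProjection.toLinearMap
  have hWV : W ≤ V := Submodule.map_le_iff_le_comap.2 fun v _ => V.starProjection_apply_mem v
  have hW : finrank ℝ W ≤ Z.rank :=
    calc finrank ℝ W ≤ finrank ℝ (Submodule.span ℝ (Set.range fun c => column e c z)) :=
          Submodule.finrank_map_le _ _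
      _ = Z.rank := by rw [finrank_span_range_column, LinearEquiv.apply_symm_apply]
  have hz : S.starProjection z ∈ columnSubspace e W := mem_columnSubspace.2 fun c => by
    rw [column_starProjection]
    exact Submodule.mem_map_of_mem (Submodule.subset_span ⟨c, rfl⟩)
  refine ⟨W, hWV, hW, ?_⟩
  calc ‖S.starProjection x - (columnSubspace e W).starProjection x‖
      = ‖S.starProjection x - (columnSubspace e W).starProjection (S.starProjection x)‖ := by
        rw [← ContinuousLinearMap.comp_apply,
          Submodule.starProjection_comp_starProjection_of_le (columnSubspace_mono e hWV)]
    _ ≤ ‖S.starProjection x - S.starProjection z‖ :=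
        (columnSubspace e W).norm_sub_starProjection_le _ hz
    _ ≤ ‖x - z‖ := by
        rw [← map_sub]
        exact S.norm_starProjection_apply_le _
    _ = mfrob (unfold e x - Z) := by
        rw [← mfrob_unfold e, map_sub, LinearEquiv.apply_symm_apply]

end Unfold

theorem Matrix.isClosed_setOf_rank_le {m n : Type*} [Fintype m] [Fintype n] (r : ℕ) :
    IsClosed {A : Matrix m n ℝ | A.rank ≤ r} := by
  classical
  let φ : Matrix m n ℝ →ₗ[ℝ] (n → ℝ) →L[ℝ] (m → ℝ) :=
    LinearMap.toContinuousLinearMap.toLinearMap ∘ₗ Matrix.toLin'.toLinearMap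
  have hφ : ∀ A, (φ A : (n → ℝ) →ₗ[ℝ] (m → ℝ)).rank = A.rank := fun A =>
    (Module.finrank_eq_rank ℝ (LinearMap.range A.mulVecLin)).symm
  have hset : {A : Matrix m n ℝ | A.rank ≤ r} =
      φ ⁻¹' {f | ((r + 1 : ℕ) : Cardinal) ≤ (f : (n → ℝ) →ₗ[ℝ] (m → ℝ)).rank}ᶜ := by
    ext A
    simp only [Set.mem_ofPred_eq, Set.mem_preimage, Set.mem_compl_iff, hφ, Nat.cast_le, not_le,
      Nat.lt_succ_iff]
  rw [hset]
  exact (isOpen_setOfPred_nat_le_rank (r + 1)).isClosed_compl.preimage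
    (LinearMap.continuous_of_finiteDimensional φ)

/-- Through `unfold (Equiv.refl _)`, matrices with the Frobenius norm form the Euclidean space
on `m × n`, in which the closed set of matrices of rank at most `r` has a point nearest to `M`. -/
theorem exists_isLeast_mfrob_sub {m n : Type*} [Fintype m] [Fintype n] (M : Matrix m n ℝ)
    (r : ℕ) : ∃ Z : Matrix m n ℝ, Z.rank ≤ r ∧
      IsLeast {t | ∃ Z' : Matrix m n ℝ, Z'.rank ≤ r ∧ t = mfrob (M - Z')} (mfrob (M - Z)) := by
  let e := Equiv.refl (m × n)
  have hdist : ∀ A B : Matrix m n ℝ,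
      mfrob (A - B) = dist ((unfold e).symm A) ((unfold e).symm B) := by
    intro A B
    rw [dist_eq_norm, ← mfrob_unfold e, map_sub, LinearEquiv.apply_symm_apply,
      LinearEquiv.apply_symm_apply]
  have hK : IsClosed (unfold e ⁻¹' {A | A.rank ≤ r}) := (Matrix.isClosed_setOf_rank_le r).preimage
    (LinearMap.continuous_of_finiteDimensional (unfold e).toLinearMap)
  obtain ⟨z, hz, hzM⟩ := hK.exists_infDist_eq_dist ⟨0, by simp⟩ ((unfold e).symm M)
  refine ⟨unfold e z, hz, ⟨_, hz, rfl⟩, ?_⟩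
  rintro _ ⟨Z', hZ', rfl⟩
  rw [hdist, hdist, LinearEquiv.symm_apply_apply, ← hzM]
  exact Metric.infDist_le_dist_of_mem (by simpa using hZ')

def EuclideanSpace.funLeft {α β : Type*} (g : α → β) :
    EuclideanSpace ℝ β →ₗ[ℝ] EuclideanSpace ℝ α where
  toFun f := WithLp.toLp 2 (f ∘ g)
  map_add' _ _ := rfl
  map_smul' _ _ := rfl

@[simp]
theorem EuclideanSpace.funLeft_apply {α β : Type*} (g : α → β) (f : EuclideanSpace ℝ β) (a : α) :
    EuclideanSpace.funLeft g f a = f (g a) :=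
  rfl

section Tensor
variable {d : ℕ} (n : Fin d → ℕ)

def matricizeEquiv (k : ℕ) : (∀ j, Fin (n j)) ≃
    (∀ j : {j : Fin d // j.val ≤ k}, Fin (n j.1)) × (∀ j : {j : Fin d // k < j.val}, Fin (n j.1))
    where
  toFun i := (fun j => i j.1, fun j => i j.1)
  invFun p j := if h : j.val ≤ k then p.1 ⟨j, h⟩ else p.2 ⟨j, Nat.lt_of_not_le h⟩
  left_inv i := funext fun j => by by_cases h : j.val ≤ k <;> simp [h]
  right_inv p := by
    ext j
    · simp [j.2]
    · simp [Nat.not_le.2 j.2]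

theorem unfold_matricizeEquiv (X : (∀ j, Fin (n j)) → ℝ) (k : ℕ) :
    unfold (matricizeEquiv n k) (WithLp.toLp 2 X) = matricize n X k :=
  rfl

theorem tfrob_ofLp (v : EuclideanSpace ℝ (∀ j, Fin (n j))) : tfrob v.ofLp = ‖v‖ := by
  simp [EuclideanSpace.norm_eq, tfrob]

theorem mfrob_matricize (X : (∀ j, Fin (n j)) → ℝ) (k : ℕ) :
    mfrob (matricize n X k) = tfrob X := by
  rw [← unfold_matricizeEquiv, mfrob_unfold, ← tfrob_ofLp]

theorem exists_columnSubspace_matricizeEquiv_succ (k : ℕ)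
    (V : Submodule ℝ (EuclideanSpace ℝ (∀ j : {j : Fin d // j.val ≤ k}, Fin (n j.1)))) :
    ∃ V', columnSubspace (matricizeEquiv n k) V = columnSubspace (matricizeEquiv n (k + 1)) V' := by
  -- a column index at level `k` is an entry at position `k + 1` and a column index at level `k + 1`
  let mix (γ : ∀ j : {j : Fin d // k < j.val}, Fin (n j.1))
      (γ' : ∀ j : {j : Fin d // k + 1 < j.val}, Fin (n j.1)) :
      ∀ j : {j : Fin d // k < j.val}, Fin (n j.1) :=
    fun j => if h : j.val.val ≤ k + 1 then γ j else γ' ⟨j.1, Nat.lt_of_not_le h⟩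
  let toRow γ ρ := (matricizeEquiv n (k + 1) ((matricizeEquiv n k).symm (ρ, γ))).1
  have hcol : ∀ γ γ' T,
      EuclideanSpace.funLeft (toRow γ) (column (matricizeEquiv n (k + 1)) γ' T) =
        column (matricizeEquiv n k) (mix γ γ') T := by
    intro γ γ' T
    ext ρ
    simp only [EuclideanSpace.funLeft_apply, column_apply]
    refine congrArg (fun i => T i) (funext fun j => ?_)
    simp only [toRow, mix, matricizeEquiv, Equiv.coe_fn_mk, Equiv.coe_fn_symm_mk]
    split_ifs <;> first | rfl | omega
  have hmix : ∀ γ, mix γ (fun j => γ ⟨j.1, by have := j.2; omega⟩) = γ := by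
    intro γ
    funext j
    simp only [mix]
    split_ifs <;> rfl
  refine ⟨⨅ γ, V.comap (EuclideanSpace.funLeft (toRow γ)), le_antisymm ?_ ?_⟩ <;> intro T hT <;>
    simp only [mem_columnSubspace, Submodule.mem_iInf, Submodule.mem_comap, hcol] at hT ⊢
  · exact fun γ' γ => hT (mix γ γ')
  · intro γ
    simpa only [hmix] using hT (fun j => γ ⟨j.1, by have := j.2; omega⟩) γ

/-- One TTSVD step: the columns of the `k`-th unfolding are restricted further, to the projected
column space of a best rank-`r` approximation of `X_{<k>}`. -/
theorem exists_ttsvd_step (k r : ℕ) (X : (∀ j, Fin (n j)) → ℝ)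
    (V : Submodule ℝ (EuclideanSpace ℝ (∀ j : {j : Fin d // j.val ≤ k}, Fin (n j.1)))) :
    ∃ S' ≤ columnSubspace (matricizeEquiv n k) V,
      (∃ V', S' = columnSubspace (matricizeEquiv n (k + 1)) V') ∧
      (S' : Set (EuclideanSpace ℝ (∀ j, Fin (n j)))) ⊆ {T | (matricize n T.ofLp k).rank ≤ r} ∧
      ‖(columnSubspace (matricizeEquiv n k) V).starProjection (WithLp.toLp 2 X) -
          S'.starProjection (WithLp.toLp 2 X)‖ ≤
        sInf {t | ∃ Z, Z.rank ≤ r ∧ t = mfrob (matricize n X k - Z)} := by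
  obtain ⟨Z, hZr, hZ⟩ := exists_isLeast_mfrob_sub (matricize n X k) r
  obtain ⟨W, hWV, hW, hWX⟩ :=
    exists_le_finrank_le_norm_sub_starProjection_le (matricizeEquiv n k) V (WithLp.toLp 2 X) Z
  refine ⟨columnSubspace _ W, columnSubspace_mono _ hWV,
    exists_columnSubspace_matricizeEquiv_succ n k W,
    fun T hT => (rank_unfold_le_finrank hT).trans (hW.trans hZr), ?_⟩
  rw [hZ.csInf_eq]
  exact hWX

end Tensor

theorem le_sqrt_mul_sInf_of_sq_le_sum {m : ℕ} {a : ℝ} {ε : Fin m → ℝ} {s : Set ℝ}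
    (ha : a ^ 2 ≤ ∑ k, ε k ^ 2) (hε : ∀ k, 0 ≤ ε k) (hs : s.Nonempty) (hs0 : ∀ t ∈ s, 0 ≤ t)
    (hεs : ∀ k, ∀ t ∈ s, ε k ≤ t) : a ≤ √m * sInf s := by
  have h0 : 0 ≤ sInf s := Real.sInf_nonneg hs0
  have hsum : ∑ k, ε k ^ 2 ≤ m * sInf s ^ 2 :=
    calc ∑ k, ε k ^ 2 ≤ ∑ _k : Fin m, sInf s ^ 2 :=
          Finset.sum_le_sum fun k _ => pow_le_pow_left₀ (hε k) (le_csInf hs (hεs k)) 2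
      _ = m * sInf s ^ 2 := by simp
  calc a ≤ √(a ^ 2) := by rw [Real.sqrt_sq_eq_abs]; exact le_abs_self a
    _ ≤ √(m * sInf s ^ 2) := Real.sqrt_le_sqrt (ha.trans hsum)
    _ = √m * sInf s := by rw [Real.sqrt_mul (Nat.cast_nonneg m), Real.sqrt_sq h0]

theorem ttsvd_quasioptimal_general (d : ℕ) (n : Fin d → ℕ)
    (r : Fin (d - 1) → ℕ) (X : (∀ k, Fin (n k)) → ℝ) :
    ∃ Y : (∀ k, Fin (n k)) → ℝ,
      (∀ k : Fin (d - 1), (matricize n Y k.val).rank ≤ r k) ∧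
      tfrob (X - Y) ^ 2 ≤ ∑ k : Fin (d - 1),
        (sInf {t : ℝ | ∃ Z : Matrix (∀ j : {j : Fin d // j.val ≤ k.val}, Fin (n j.1))
            (∀ j : {j : Fin d // k.val < j.val}, Fin (n j.1)) ℝ,
          Z.rank ≤ r k ∧ t = mfrob (matricize n X k.val - Z)}) ^ 2 ∧
      tfrob (X - Y) ≤ Real.sqrt ((d : ℝ) - 1) *
        sInf {t : ℝ | ∃ W : (∀ k, Fin (n k)) → ℝ,
          (∀ k : Fin (d - 1), (matricize n W k.val).rank ≤ r k) ∧ t = tfrob (X - W)} := by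
  obtain ⟨S, -, hSr, hSX⟩ := exists_submodule_sq_norm_sub_starProjection_le_sum
    (fun k S => ∃ V, S = columnSubspace (matricizeEquiv n k) V) (WithLp.toLp 2 X)
    ⟨⊤, (columnSubspace_top _).symm⟩ (d - 1) (fun k => {T | (matricize n T.ofLp k).rank ≤ r k}) _
    fun k S ⟨V, hV⟩ => hV ▸ exists_ttsvd_step n k (r k) X V
  set Y := S.starProjection (WithLp.toLp 2 X)
  have hY : ∀ k, (matricize n Y.ofLp k.val).rank ≤ r k :=
    fun k => hSr k (S.starProjection_apply_mem _)
  have hXY : tfrob (X - Y.ofLp) = ‖WithLp.toLp 2 X - Y‖ := tfrob_ofLp n _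
  have hd : √((d - 1 : ℕ) : ℝ) = √((d : ℝ) - 1) := by
    rcases d with _ | d
    · norm_num [Real.sqrt_eq_zero_of_nonpos]
    · simp
  refine ⟨Y.ofLp, hY, hXY ▸ hSX, ?_⟩
  rw [← hd, hXY]
  refine le_sqrt_mul_sInf_of_sq_le_sum hSX (fun k => Real.sInf_nonneg ?_) ⟨_, Y.ofLp, hY, rfl⟩
    (fun _ ⟨W, _, hW⟩ => hW ▸ Real.sqrt_nonneg _) fun k _ ⟨W, hW, hWX⟩ => ?_
  · rintro _ ⟨Z, -, rfl⟩
    exact Real.sqrt_nonneg _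
  · rw [hWX, ← mfrob_matricize n (X - W) k]
    exact csInf_le ⟨0, fun _ ⟨Z, _, hZ⟩ => hZ ▸ Real.sqrt_nonneg _⟩ ⟨_, hW k, rfl⟩

/-- **Quasioptimality of TTSVD.**  Let `X ∈ ℝ^{n₁ × … × n_d}` (`d ≥ 2`) and, for each
`1 ≤ k ≤ d-1`, let `ε_k = min{‖X_{<k>} - Z‖_F : rank Z ≤ r k}`.  Then there exists a tensor
`Y` of TT rank componentwise at most `r` such that `‖X - Y‖_F² ≤ Σ_k ε_k²`, and consequently
`‖X - Y‖_F ≤ √(d-1) ⋅ min{‖X - W‖_F : TT rank of W ⪯ r}`. -/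
theorem ttsvd_quasioptimal (d : ℕ) (hd : 2 ≤ d) (n : Fin d → ℕ)
    (r : Fin (d - 1) → ℕ) (X : (∀ k, Fin (n k)) → ℝ) :
    ∃ Y : (∀ k, Fin (n k)) → ℝ,
      (∀ k : Fin (d - 1), (matricize n Y k.val).rank ≤ r k) ∧
      tfrob (X - Y) ^ 2 ≤ ∑ k : Fin (d - 1),
        (sInf {t : ℝ | ∃ Z : Matrix (∀ j : {j : Fin d // j.val ≤ k.val}, Fin (n j.1))
            (∀ j : {j : Fin d // k.val < j.val}, Fin (n j.1)) ℝ,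
          Z.rank ≤ r k ∧ t = mfrob (matricize n X k.val - Z)}) ^ 2 ∧
      tfrob (X - Y) ≤ Real.sqrt ((d : ℝ) - 1) *
        sInf {t : ℝ | ∃ W : (∀ k, Fin (n k)) → ℝ,
          (∀ k : Fin (d - 1), (matricize n W k.val).rank ≤ r k) ∧ t = tfrob (X - W)} :=
  ttsvd_quasioptimal_general d n r X
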